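/- The minimum cost of a 2-club cover of a graph G equals 2ccedvs(G), the minimum length of a sequence of edge deletions and vertex splits turning G into a disjoint union of 2-clubs. -/

import Mathlib

open SimpleGraph

/-- `H` is obtained from `G` by splitting vertex `v` into two copies `v` and `v'`
(where `v'` was an isolated vertex), with `N(v₁) ∪ N(v₂) = N(v)`. -/
def IsSplitAt {V : Type*} (v v' : V) (G H : SimpleGraph V) : Prop :=
  v ≠ v' ∧ G.neighborSet v' = ∅ ∧ ¬ H.Adj v v' ∧
  (∀ x y : V, x ≠ v → x ≠ v' → y ≠ v → y ≠ v' → (H.Adj x y ↔ G.Adj x y)) ∧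
  (∀ x : V, x ≠ v → x ≠ v' → ((H.Adj v x ∨ H.Adj v' x) ↔ G.Adj v x))

/-- `H` is obtained from `G` by a single vertex split. -/
def IsSplit {V : Type*} (G H : SimpleGraph V) : Prop :=
  ∃ v v', IsSplitAt v v' G H

/-- `H` is obtained from `G` by deleting a single (existing) edge. -/
def IsEdgeDeletion {V : Type*} (G H : SimpleGraph V) : Prop :=
  ∃ u v : V, G.Adj u v ∧ H = G.deleteEdges {s(u, v)}

/-- Editing operations: edge deletion, or vertex split (recording the split vertex
and the name of the new copy). -/
inductive Op where
  | del : ℕ → ℕ → Op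
  | split : ℕ → ℕ → Op

/-- Semantics of one operation. -/
def OpApplies : Op → SimpleGraph ℕ → SimpleGraph ℕ → Prop
  | Op.del u v, G, H => G.Adj u v ∧ H = G.deleteEdges {s(u, v)}
  | Op.split v v', G, H => IsSplitAt v v' G H

/-- Applying a list of operations in order. -/
def OpsApply : List Op → SimpleGraph ℕ → SimpleGraph ℕ → Prop
  | [], G, H => H = G
  | o :: l, G, H => ∃ G', OpApplies o G G' ∧ OpsApply l G' H

def IsSplitOp : Op → Prop
  | Op.split _ _ => True
  | Op.del _ _ => False

/-- The set of vertices on which a split is performed in the list of operations. -/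
def splitVerts (l : List Op) : Set ℕ := {v | ∃ v', Op.split v v' ∈ l}

/-- `G` is a disjoint union of 2-clubs: within each connected component all
distances are at most 2. -/
def Is2ClubGraph (G : SimpleGraph ℕ) : Prop :=
  ∀ u v : ℕ, G.Reachable u v → G.dist u v ≤ 2

/-- Minimum number of vertex splits turning `G` into a disjoint union of 2-clubs. -/
noncomputable def twoCcvs (G : SimpleGraph ℕ) : ℕ :=
  sInf {k | ∃ l H, l.length = k ∧ (∀ o ∈ l, IsSplitOp o) ∧ OpsApply l G H ∧ Is2ClubGraph H}

/-- Minimum number of edge deletions and vertex splits turning `G` into a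
disjoint union of 2-clubs. -/
noncomputable def twoCcedvs (G : SimpleGraph ℕ) : ℕ :=
  sInf {k | ∃ l H, l.length = k ∧ OpsApply l G H ∧ Is2ClubGraph H}

/-- The subgraph of `G` induced on `s` (kept on the same vertex type, all
vertices outside `s` becoming isolated). -/
def inducedOn (G : SimpleGraph ℕ) (s : Set ℕ) : SimpleGraph ℕ where
  Adj x y := G.Adj x y ∧ x ∈ s ∧ y ∈ s
  symm := ⟨fun x y h => ⟨h.1.symm, h.2.2, h.2.1⟩⟩
  loopless := ⟨fun x h => G.loopless.irrefl x h.1⟩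

/-- The set `s` induces a 2-club in `G` (connected, diameter at most 2). -/
def Inducing2Club (G : SimpleGraph ℕ) (s : Set ℕ) : Prop :=
  ∀ u ∈ s, ∀ v ∈ s, (inducedOn G s).Reachable u v ∧ (inducedOn G s).dist u v ≤ 2

/-- The path with vertices `0, 1, …, m` (length `m`). -/
def pathG (m : ℕ) : SimpleGraph ℕ :=
  SimpleGraph.fromRel (fun i j => j = i + 1 ∧ j ≤ m)

/-- The cycle with vertices `0, 1, …, n-1`. -/
def cycleG (n : ℕ) : SimpleGraph ℕ :=
  SimpleGraph.fromRel (fun i j => i < n ∧ j = (i + 1) % n)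

/-- Total cost of a 2-club cover: each vertex pays (multiplicity − 1), each edge
not contained in some set of the cover pays 1. -/
noncomputable def coverCost (G : SimpleGraph ℕ) (C : Finset (Finset ℕ)) : ℕ :=
  (∑ v ∈ C.sup id, ((C.filter (fun S => v ∈ S)).card - 1)) +
    Set.ncard {e : Sym2 ℕ | e ∈ G.edgeSet ∧ ¬ ∃ S ∈ C, ∀ x ∈ e, x ∈ S}

/-- `C` is a 2-club cover of `G`: it covers the vertices of `G` and each set
induces a 2-club. -/
def Is2ClubCover (G : SimpleGraph ℕ) (C : Finset (Finset ℕ)) : Prop :=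
  (∀ v ∈ G.support, ∃ S ∈ C, v ∈ S) ∧ ∀ S ∈ C, Inducing2Club G (↑S : Set ℕ)

/-!
An edit sequence turning `G` into a disjoint union `H` of 2-clubs yields a homomorphism
`H →g G` (merge every split-off copy back into its original) that is the identity outside a set
of at most one vertex per split, and misses at most one edge of `G` per deletion. The images of
the components of `H`, padded with singletons, form a 2-club cover of `G`: a vertex lies in no
more sets than it has preimages, and an edge is uncovered only if it is missed. So the cover
costs at most the length of the sequence.

Conversely, given a 2-club cover, delete the edges lying in no block, then for every vertex split
off one fresh copy for each block containing it other than a chosen canonical one. This takes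
exactly `coverCost` operations and leaves the vertex-disjoint union of the blocks, each of which
is still a 2-club.
-/

section SplitAt

variable {V : Type*} [DecidableEq V] {v v' : V} {G H : SimpleGraph V}

theorem IsSplitAt.adj_update (h : IsSplitAt v v' G H) {a b : V} (hab : H.Adj a b) :
    G.Adj (Function.update id v' v a) (Function.update id v' v b) := by
  obtain ⟨hne, -, hvv', hmid, hv⟩ := h
  simp only [Function.update_apply, id]
  by_cases a = v <;> by_cases b = v <;> grind [SimpleGraph.Adj.symm, SimpleGraph.irrefl]

theorem IsSplitAt.exists_adj (h : IsSplitAt v v' G H) {x y : V} (hxy : G.Adj x y) :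
    Relation.Map H.Adj (Function.update id v' v) (Function.update id v' v) x y := by
  obtain ⟨hne, hiso, -, hmid, hv⟩ := h
  simp only [Set.eq_empty_iff_forall_notMem, mem_neighborSet] at hiso
  have hx' : x ≠ v' := by rintro rfl; exact hiso y hxy
  have hy' : y ≠ v' := by rintro rfl; exact hiso x hxy.symm
  by_cases hx : x = v
  · subst hx
    rcases (hv y hxy.ne.symm hy').2 hxy with h | h
    · exact ⟨x, y, h, by simp [hne], by simp [hy']⟩
    · exact ⟨v', y, h, by simp, by simp [hy']⟩
  by_cases hy : y = v
  · subst hy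
    rcases (hv x hxy.ne hx').2 hxy.symm with h | h
    · exact ⟨x, y, h.symm, by simp [hx'], by simp [hne]⟩
    · exact ⟨x, v', h.symm, by simp [hx'], by simp⟩
  exact ⟨x, y, (hmid x y hx hx' hy hy').2 hxy, by simp [hx'], by simp [hy']⟩

theorem isSplitAt_of_adj_iff (hne : v ≠ v')
    (h : ∀ x y, G.Adj x y ↔
      Relation.Map H.Adj (Function.update id v' v) (Function.update id v' v) x y) :
    IsSplitAt v v' G H := by
  simp only [Relation.Map, Function.update_apply, id] at h
  refine ⟨hne, ?_, fun hvv' => ?_, fun x y hx hx' hy hy' => ?_, fun x hx hx' => ?_⟩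
  · ext x
    simp only [mem_neighborSet, h, Set.mem_empty_iff_false, iff_false]
    grind
  · exact G.loopless.irrefl v ((h v v).2 ⟨v, v', hvv', by simp [hne], by simp⟩)
  · rw [h]
    refine ⟨fun hxy => ⟨x, y, hxy, by simp [hx'], by simp [hy']⟩, ?_⟩
    rintro ⟨a, b, hab, ha, hb⟩
    grind
  · rw [h]
    constructor
    · rintro (hvx | hvx)
      · exact ⟨v, x, hvx, by simp [hne], by simp [hx']⟩
      · exact ⟨v', x, hvx, by simp, by simp [hx']⟩
    · rintro ⟨a, b, hab, ha, hb⟩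
      grind

def IsSplitAt.hom (h : IsSplitAt v v' G H) : H →g G := ⟨Function.update id v' v, h.adj_update⟩

theorem IsSplitAt.edgeSet_subset_image (h : IsSplitAt v v' G H) :
    G.edgeSet ⊆ Sym2.map (Function.update id v' v) '' H.edgeSet := by
  intro e he
  induction e using Sym2.ind with
  | _ x y =>
    obtain ⟨a, b, hab, rfl, rfl⟩ := h.exists_adj he
    exact ⟨s(a, b), hab, rfl⟩

theorem IsSplitAt.encard_edgeSet_diff_le (h : IsSplitAt v v' G H) {W : Type*}
    {K : SimpleGraph W} (f : K →g H) :
    (G.edgeSet \ Sym2.map (h.hom.comp f) '' K.edgeSet).encard ≤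
      (H.edgeSet \ Sym2.map f '' K.edgeSet).encard := by
  refine (Set.encard_le_encard ?_).trans
    (Set.encard_image_le (Sym2.map (Function.update id v' v)) _)
  rintro e ⟨he, hf⟩
  obtain ⟨e₁, he₁, rfl⟩ := h.edgeSet_subset_image he
  refine ⟨e₁, ⟨he₁, ?_⟩, rfl⟩
  rintro ⟨e₂, he₂, rfl⟩
  exact hf ⟨e₂, he₂, by rw [Sym2.map_map]; rfl⟩

end SplitAt

theorem SimpleGraph.encard_edgeSet_diff_le_deleteEdges {V : Type*} (G : SimpleGraph V)
    (e : Sym2 V) (s : Set (Sym2 V)) :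
    (G.edgeSet \ s).encard ≤ ((G.deleteEdges {e}).edgeSet \ s).encard + 1 := by
  refine (Set.encard_le_encard ?_).trans (Set.encard_insert_le _ e)
  rintro e' ⟨he', hs⟩
  by_cases hee' : e' = e
  · exact Or.inl hee'
  · exact Or.inr ⟨by simp [edgeSet_deleteEdges, he', hee'], hs⟩

theorem OpsApply.append {l₁ l₂ : List Op} {G G' H : SimpleGraph ℕ}
    (h₁ : OpsApply l₁ G G') (h₂ : OpsApply l₂ G' H) : OpsApply (l₁ ++ l₂) G H := by
  induction l₁ generalizing G with
  | nil => exact (h₁ : G' = G) ▸ h₂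
  | cons o l ih =>
    obtain ⟨G₁, ho, hl⟩ := h₁
    exact ⟨G₁, ho, ih hl⟩

theorem OpsApply.exists_hom {l : List Op} {G H : SimpleGraph ℕ} (h : OpsApply l G H) :
    ∃ (f : H →g G) (F : Finset ℕ), (∀ x ∉ F, f x = x) ∧
      (G.edgeSet \ Sym2.map f '' H.edgeSet).encard + F.card ≤ l.length := by
  induction l generalizing G with
  | nil =>
    cases (h : H = G)
    exact ⟨Hom.id, ∅, fun _ _ => rfl, by simp⟩
  | cons o l ih =>
    obtain ⟨G₁, ho, hl⟩ := h
    obtain ⟨f, F, hF, hcost⟩ := ih hl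
    cases o with
    | del u w =>
      obtain ⟨-, rfl⟩ := ho
      refine ⟨(Hom.ofLE (deleteEdges_le _)).comp f, F, hF, ?_⟩
      calc _ ≤ _ + 1 + (F.card : ℕ∞) := add_le_add_left
            (G.encard_edgeSet_diff_le_deleteEdges s(u, w) (Sym2.map f '' H.edgeSet)) _
        _ ≤ (Op.del u w :: l).length := by
            rw [add_right_comm, List.length_cons, Nat.cast_succ]
            gcongr
    | split v v' =>
      have hsplit : IsSplitAt v v' G G₁ := ho
      refine ⟨hsplit.hom.comp f, insert v' F, fun x hx => ?_, ?_⟩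
      · rw [Finset.mem_insert, not_or] at hx
        simp [IsSplitAt.hom, hF x hx.2, hx.1]
      calc _ ≤ (G₁.edgeSet \ Sym2.map f '' H.edgeSet).encard + (F.card + 1 : ℕ∞) :=
            add_le_add (hsplit.encard_edgeSet_diff_le f)
              (by exact_mod_cast Finset.card_insert_le _ _)
        _ ≤ (Op.split v v' :: l).length := by
            rw [← add_assoc, List.length_cons, Nat.cast_succ]
            gcongr

namespace SimpleGraph

variable {V W : Type*} {A : SimpleGraph V} {B : SimpleGraph W} {K : Set V} {x y : V}

theorem Reachable.mem_of_adj_closed (hK : ∀ x y, x ∈ K → A.Adj x y → y ∈ K)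
    (h : A.Reachable x y) (hx : x ∈ K) : y ∈ K := by
  obtain ⟨p⟩ := h
  induction p with
  | nil => exact hx
  | cons hadj _ ih => exact ih (hK _ _ hx hadj)

theorem Walk.exists_map_of_adj_closed {f : V → W}
    (hK : ∀ x y, x ∈ K → A.Adj x y → y ∈ K)
    (hf : ∀ x y, x ∈ K → A.Adj x y → B.Adj (f x) (f y)) (p : A.Walk x y) (hx : x ∈ K) :
    ∃ q : B.Walk (f x) (f y), q.length = p.length := by
  induction p with
  | nil => exact ⟨Walk.nil, rfl⟩
  | cons hadj _ ih =>
    obtain ⟨q, hq⟩ := ih (hK _ _ hx hadj)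
    exact ⟨Walk.cons (hf _ _ hx hadj) q, by simp [hq]⟩

theorem Reachable.dist_map_le_of_adj_closed {f : V → W}
    (hK : ∀ x y, x ∈ K → A.Adj x y → y ∈ K) (hf : ∀ x y, x ∈ K → A.Adj x y → B.Adj (f x) (f y))
    (h : A.Reachable x y) (hx : x ∈ K) :
    B.Reachable (f x) (f y) ∧ B.dist (f x) (f y) ≤ A.dist x y := by
  obtain ⟨p, hp⟩ := h.exists_walk_length_eq_dist
  obtain ⟨q, hq⟩ := p.exists_map_of_adj_closed hK hf hx
  exact ⟨⟨q⟩, hp ▸ hq ▸ dist_le q⟩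

open Classical in
noncomputable def reachableFinset (A : SimpleGraph V) (s : Finset V) (a : V) : Finset V :=
  s.filter (A.Reachable a)

theorem mem_reachableFinset {s : Finset V} {a : V} :
    y ∈ A.reachableFinset s a ↔ y ∈ s ∧ A.Reachable a y := by
  classical
  simp [reachableFinset]

theorem reachableFinset_eq_of_mem {s : Finset V} {a : V} (hy : y ∈ A.reachableFinset s a) :
    A.reachableFinset s y = A.reachableFinset s a := by
  rw [mem_reachableFinset] at hy
  ext
  simp only [mem_reachableFinset]
  exact and_congr_right fun _ => ⟨hy.2.trans, hy.2.symm.trans⟩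

end SimpleGraph

theorem inducing2Club_singleton (G : SimpleGraph ℕ) (v : ℕ) : Inducing2Club G {v} := by
  rintro _ rfl _ rfl
  simp

section ComponentCover

variable {G H : SimpleGraph ℕ} (f : H →g G) (SH SG : Finset ℕ)

/-- With `SH` the support of `H` and `SG` that of `G`: the images of the components of `H`,
and a singleton for every vertex of `G` that these images miss. -/
noncomputable def componentCover : Finset (Finset ℕ) :=
  SH.image (fun a => (H.reachableFinset SH a).image f) ∪
    (SG \ SH.image f).image (fun w => ({w} : Finset ℕ))

open Finset in
theorem card_filter_mem_componentCover_le (v : ℕ) :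
    #{S ∈ componentCover f SH SG | v ∈ S} ≤ max #{x ∈ SH | f x = v} 1 := by
  classical
  have hcomp : #{S ∈ SH.image (fun a => (H.reachableFinset SH a).image f) | v ∈ S} ≤
      #{x ∈ SH | f x = v} := by
    refine (card_le_card ?_).trans (card_image_le (f := fun x => (H.reachableFinset SH x).image f))
    intro S hS
    obtain ⟨haS, hvS⟩ := mem_filter.1 hS
    obtain ⟨a, -, rfl⟩ := mem_image.1 haS
    obtain ⟨x, hx, rfl⟩ := mem_image.1 hvS
    exact mem_image.2 ⟨x, mem_filter.2 ⟨(mem_reachableFinset.1 hx).1, rfl⟩,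
      by rw [reachableFinset_eq_of_mem hx]⟩
  rw [componentCover, filter_union]
  refine (card_union_le _ _).trans ?_
  by_cases hv : v ∈ SH.image f
  · have : {S ∈ (SG \ SH.image f).image (fun w => ({w} : Finset ℕ)) | v ∈ S} = ∅ := by
      ext S
      simp only [mem_filter, mem_image, mem_sdiff, notMem_empty, iff_false]
      rintro ⟨⟨w, ⟨-, hw⟩, rfl⟩, hvw⟩
      exact hw (mem_image.1 (mem_singleton.1 hvw ▸ hv))
    simpa [this] using hcomp.trans (le_max_left _ _)
  · have hempty : {x ∈ SH | f x = v} = ∅ := by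
      ext x
      simp only [mem_filter, notMem_empty, iff_false, not_and]
      exact fun hx hxv => hv (mem_image.2 ⟨x, hx, hxv⟩)
    have : {S ∈ (SG \ SH.image f).image (fun w => ({w} : Finset ℕ)) | v ∈ S} ⊆ {{v}} := by
      intro S hS
      simp only [mem_filter, mem_image] at hS
      obtain ⟨⟨w, -, rfl⟩, hvw⟩ := hS
      rw [mem_singleton.1 hvw]
      exact mem_singleton_self _
    have hsingle := card_le_card this
    rw [hempty, card_empty] at hcomp
    rw [card_singleton] at hsingle
    rw [hempty, card_empty, max_eq_right zero_le_one]
    omega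

variable {f SH SG} (hSH : ∀ a, a ∈ SH ↔ a ∈ H.support)
include hSH

theorem inducing2Club_image_reachableFinset (hH : Is2ClubGraph H) (a : ℕ) :
    Inducing2Club G ↑((H.reachableFinset SH a).image f) := by
  set K : Set ℕ := ↑(H.reachableFinset SH a)
  have hK : ∀ x y, x ∈ K → H.Adj x y → y ∈ K := by
    intro x y hx hxy
    rw [Finset.mem_coe, mem_reachableFinset] at hx ⊢
    exact ⟨(hSH y).2 ⟨x, hxy.symm⟩, hx.2.trans hxy.reachable⟩
  have hf : ∀ x y, x ∈ K → H.Adj x y →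
      (inducedOn G ↑((H.reachableFinset SH a).image f)).Adj (f x) (f y) := fun x y hx hxy =>
    ⟨f.map_adj hxy, by simpa using ⟨x, hx, rfl⟩, by simpa using ⟨y, hK x y hx hxy, rfl⟩⟩
  rintro _ hu _ hv
  simp only [Finset.coe_image, Set.mem_image] at hu hv
  obtain ⟨x, hx, rfl⟩ := hu
  obtain ⟨y, hy, rfl⟩ := hv
  have hxy : H.Reachable x y := (mem_reachableFinset.1 hx).2.symm.trans (mem_reachableFinset.1 hy).2
  have := hxy.dist_map_le_of_adj_closed hK hf hx
  exact ⟨this.1, this.2.trans (hH x y hxy)⟩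

theorem is2ClubCover_componentCover (hSG : ∀ v ∈ G.support, v ∈ SG) (hH : Is2ClubGraph H) :
    Is2ClubCover G (componentCover f SH SG) := by
  refine ⟨fun v hv => ?_, fun S hS => ?_⟩
  · by_cases hvf : v ∈ SH.image f
    · obtain ⟨a, ha, rfl⟩ := Finset.mem_image.1 hvf
      exact ⟨_, Finset.mem_union_left _ (Finset.mem_image_of_mem _ ha),
        Finset.mem_image_of_mem _ (mem_reachableFinset.2 ⟨ha, .refl a⟩)⟩
    · exact ⟨{v}, Finset.mem_union_right _ (Finset.mem_image_of_mem _ (by simp [hSG v hv, hvf])),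
        Finset.mem_singleton_self v⟩
  · rcases Finset.mem_union.1 hS with hS | hS
    · obtain ⟨a, -, rfl⟩ := Finset.mem_image.1 hS
      exact inducing2Club_image_reachableFinset hSH hH a
    · obtain ⟨v, -, rfl⟩ := Finset.mem_image.1 hS
      simpa using inducing2Club_singleton G v

theorem uncoveredEdges_componentCover_subset :
    {e | e ∈ G.edgeSet ∧ ¬ ∃ S ∈ componentCover f SH SG, ∀ x ∈ e, x ∈ S} ⊆
      G.edgeSet \ Sym2.map f '' H.edgeSet := by
  rintro e ⟨he, hnot⟩
  refine ⟨he, ?_⟩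
  rintro ⟨e', he', rfl⟩
  induction e' using Sym2.ind with
  | _ a b =>
    have ha : a ∈ SH := (hSH a).2 ⟨b, he'⟩
    have hb : b ∈ SH := (hSH b).2 ⟨a, he'.symm⟩
    refine hnot ⟨_, Finset.mem_union_left _ (Finset.mem_image_of_mem _ ha), ?_⟩
    simp only [Sym2.map_mk, Sym2.mem_iff, forall_eq_or_imp, forall_eq]
    exact ⟨Finset.mem_image_of_mem _ (mem_reachableFinset.2 ⟨ha, .refl a⟩),
      Finset.mem_image_of_mem _ (mem_reachableFinset.2 ⟨hb, he'.reachable⟩)⟩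

open Finset in
theorem coverCost_componentCover_le {F : Finset ℕ} (hF : ∀ x ∉ F, f x = x) :
    (coverCost G (componentCover f SH SG) : ℕ∞) ≤
      (G.edgeSet \ Sym2.map f '' H.edgeSet).encard + F.card := by
  classical
  have hmult := card_filter_mem_componentCover_le f SH SG
  have hedge := (Set.ncard_le_encard _).trans
    (Set.encard_le_encard (uncoveredEdges_componentCover_subset (f := f) (SG := SG) hSH))
  set C := componentCover f SH SG
  set M := F.filter (fun x => f x ≠ x)
  have hfiber (v : ℕ) : #{S ∈ C | v ∈ S} - 1 ≤ #{x ∈ M | f x = v} := by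
    have hsub : {x ∈ SH | f x = v} ⊆ insert v {x ∈ M | f x = v} := by
      intro x hx
      rw [mem_filter] at hx
      by_cases hxv : x = v
      · exact hxv ▸ mem_insert_self x _
      · have hxF : x ∈ F := by
          by_contra hxF
          exact hxv (hF x hxF ▸ hx.2)
        exact mem_insert_of_mem (mem_filter.2 ⟨mem_filter.2 ⟨hxF, hx.2 ▸ Ne.symm hxv⟩, hx.2⟩)
    have := (card_le_card hsub).trans (card_insert_le _ _)
    have := hmult v
    omega
  have hvert : ∑ v ∈ C.sup id, (#{S ∈ C | v ∈ S} - 1) ≤ #F :=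
    calc _ ≤ ∑ v ∈ C.sup id, #{x ∈ M | f x = v} := sum_le_sum fun v _ => hfiber v
      _ = #{x ∈ M | f x ∈ C.sup id} := sum_card_fiberwise_eq_card_filter _ _ _
      _ ≤ #F := (card_filter_le _ _).trans (card_filter_le _ _)
  rw [coverCost, Nat.cast_add, add_comm]
  exact add_le_add hedge (by exact_mod_cast hvert)

end ComponentCover

theorem exists_is2ClubCover_coverCost_le {G H : SimpleGraph ℕ} (hfin : G.support.Finite)
    {l : List Op} (h : OpsApply l G H) (hH : Is2ClubGraph H) :
    ∃ C, Is2ClubCover G C ∧ coverCost G C ≤ l.length := by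
  obtain ⟨f, F, hF, hcost⟩ := h.exists_hom
  have hHfin : H.support.Finite := by
    refine (hfin.union F.finite_toSet).subset fun a ⟨b, hab⟩ => ?_
    by_cases haF : a ∈ F
    · exact Or.inr haF
    · exact Or.inl (hF a haF ▸ ⟨f b, f.map_adj hab⟩)
  refine ⟨componentCover f hHfin.toFinset hfin.toFinset,
    is2ClubCover_componentCover (by simp) (by simp) hH, ?_⟩
  exact_mod_cast (coverCost_componentCover_le (by simp) hF).trans hcost

section BlockGraph

variable (C : Finset (Finset ℕ))

noncomputable def canonicalBlock (v : ℕ) : Finset ℕ :=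
  if h : ∃ S ∈ C, v ∈ S then h.choose else ∅

theorem canonicalBlock_spec {v : ℕ} (h : ∃ S ∈ C, v ∈ S) :
    canonicalBlock C v ∈ C ∧ v ∈ canonicalBlock C v := by
  rw [canonicalBlock, dif_pos h]
  exact h.choose_spec

def maxVertex : ℕ := (C.sup id).sup id

theorem le_maxVertex {S : Finset ℕ} {v : ℕ} (hS : S ∈ C) (hv : v ∈ S) : v ≤ maxVertex C :=
  Finset.le_sup (f := id) (Finset.mem_sup.2 ⟨S, hS, hv⟩)

/-- A fresh vertex for the copy of `p.1` living in the block `p.2`. -/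
def copyName (p : ℕ × Finset ℕ) : ℕ := maxVertex C + 1 + Encodable.encode p

theorem maxVertex_lt_copyName (p : ℕ × Finset ℕ) : maxVertex C < copyName C p := by
  unfold copyName; omega

theorem copyName_injective : Function.Injective (copyName C) := fun p q h =>
  Encodable.encode_injective (by unfold copyName at h; omega)

open Classical in
/-- The name of `u` inside the block `S` once the pairs in `D` have been split off. -/
noncomputable def blockName (D : Finset (ℕ × Finset ℕ)) (u : ℕ) (S : Finset ℕ) : ℕ :=
  if (u, S) ∈ D then copyName C (u, S) else u

variable {C} {D : Finset (ℕ × Finset ℕ)}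

theorem blockName_of_mem {u : ℕ} {S : Finset ℕ} (h : (u, S) ∈ D) :
    blockName C D u S = copyName C (u, S) := if_pos h

theorem blockName_of_notMem {u : ℕ} {S : Finset ℕ} (h : (u, S) ∉ D) :
    blockName C D u S = u := if_neg h

theorem blockName_inj {u u' : ℕ} {S S' : Finset ℕ} (hu : u ≤ maxVertex C)
    (hu' : u' ≤ maxVertex C) (h : blockName C D u S = blockName C D u' S') :
    u = u' ∧ ((u, S) ∈ D → S = S') := by
  have := maxVertex_lt_copyName C (u, S)
  have := maxVertex_lt_copyName C (u', S')
  by_cases hD : (u, S) ∈ D <;> by_cases hD' : (u', S') ∈ D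
  · rw [blockName_of_mem hD, blockName_of_mem hD'] at h
    exact Prod.ext_iff.1 (copyName_injective C h) |>.imp_right fun h _ => h
  · rw [blockName_of_mem hD, blockName_of_notMem hD'] at h; omega
  · rw [blockName_of_notMem hD, blockName_of_mem hD'] at h; omega
  · rw [blockName_of_notMem hD, blockName_of_notMem hD'] at h
    exact ⟨h, fun h' => absurd h' hD⟩

theorem blockName_injOn {u w : ℕ} {S : Finset ℕ} (hS : S ∈ C) (hu : u ∈ S) (hw : w ∈ S)
    (h : blockName C D u S = blockName C D w S) : u = w :=
  (blockName_inj (le_maxVertex C hS hu) (le_maxVertex C hS hw) h).1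

def blockGraph (G : SimpleGraph ℕ) (C : Finset (Finset ℕ)) (D : Finset (ℕ × Finset ℕ)) :
    SimpleGraph ℕ where
  Adj a b :=
    ∃ S ∈ C, ∃ u ∈ S, ∃ w ∈ S, G.Adj u w ∧ blockName C D u S = a ∧ blockName C D w S = b
  symm := ⟨fun _ _ ⟨S, hS, u, hu, w, hw, huw, ha, hb⟩ =>
    ⟨S, hS, w, hw, u, hu, huw.symm, hb, ha⟩⟩
  loopless := ⟨fun _ ⟨_, hS, _, hu, _, hw, huw, ha, hb⟩ =>
    huw.ne (blockName_injOn hS hu hw (ha.trans hb.symm))⟩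

theorem blockGraph_empty (G : SimpleGraph ℕ) :
    blockGraph G C ∅ =
      G.deleteEdges {e | e ∈ G.edgeSet ∧ ¬ ∃ S ∈ C, ∀ x ∈ e, x ∈ S} := by
  ext a b
  simp only [blockGraph, blockName_of_notMem (Finset.notMem_empty _), deleteEdges_adj,
    Set.mem_ofPred_eq, mem_edgeSet, Sym2.mem_iff, forall_eq_or_imp, forall_eq]
  constructor
  · rintro ⟨S, hS, u, hu, w, hw, huw, rfl, rfl⟩
    exact ⟨huw, fun h => h.2 ⟨S, hS, hu, hw⟩⟩
  · rintro ⟨hab, hcov⟩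
    obtain ⟨S, hS, ha, hb⟩ := not_not.1 fun h => hcov ⟨hab, h⟩
    exact ⟨S, hS, a, ha, b, hb, hab, rfl, rfl⟩

theorem update_blockName_insert {p : ℕ × Finset ℕ} (hp : p.1 ≤ maxVertex C) (hpD : p ∉ D)
    {u : ℕ} {S : Finset ℕ} (hu : u ≤ maxVertex C) :
    Function.update id (copyName C p) p.1 (blockName C (insert p D) u S) = blockName C D u S := by
  by_cases hup : (u, S) = p
  · subst hup
    rw [blockName_of_mem (Finset.mem_insert_self _ _), blockName_of_notMem hpD,
      Function.update_self]
  · have hne : blockName C D u S ≠ copyName C p := by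
      by_cases hD : (u, S) ∈ D
      · rw [blockName_of_mem hD]; exact (copyName_injective C).ne hup
      · rw [blockName_of_notMem hD]; exact (hu.trans_lt (maxVertex_lt_copyName C p)).ne
    have hD : (u, S) ∈ insert p D ↔ (u, S) ∈ D := by simp [hup]
    rw [blockName, blockName, if_congr hD rfl rfl]
    exact Function.update_of_ne hne _ _

theorem isSplitAt_blockGraph_insert (G : SimpleGraph ℕ) {p : ℕ × Finset ℕ} (hp : p.2 ∈ C)
    (hp1 : p.1 ∈ p.2) (hpD : p ∉ D) :
    IsSplitAt p.1 (copyName C p) (blockGraph G C D) (blockGraph G C (insert p D)) := by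
  have hpM := le_maxVertex C hp hp1
  refine isSplitAt_of_adj_iff (hpM.trans_lt (maxVertex_lt_copyName C p)).ne fun x y => ⟨?_, ?_⟩
  · rintro ⟨S, hS, u, hu, w, hw, huw, rfl, rfl⟩
    exact ⟨_, _, ⟨S, hS, u, hu, w, hw, huw, rfl, rfl⟩,
      update_blockName_insert hpM hpD (le_maxVertex C hS hu),
      update_blockName_insert hpM hpD (le_maxVertex C hS hw)⟩
  · rintro ⟨_, _, ⟨S, hS, u, hu, w, hw, huw, rfl, rfl⟩, rfl, rfl⟩
    exact ⟨S, hS, u, hu, w, hw, huw,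
      (update_blockName_insert hpM hpD (le_maxVertex C hS hu)).symm,
      (update_blockName_insert hpM hpD (le_maxVertex C hS hw)).symm⟩

variable (C) in
noncomputable def splitPairs : Finset (ℕ × Finset ℕ) :=
  (C.sup id ×ˢ C).filter (fun p => p.1 ∈ p.2 ∧ p.2 ≠ canonicalBlock C p.1)

theorem mem_splitPairs {p : ℕ × Finset ℕ} :
    p ∈ splitPairs C ↔ p.2 ∈ C ∧ p.1 ∈ p.2 ∧ p.2 ≠ canonicalBlock C p.1 := by
  simp only [splitPairs, Finset.mem_filter, Finset.mem_product, Finset.mem_sup, id]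
  exact ⟨fun ⟨⟨_, h⟩, h'⟩ => ⟨h, h'⟩,
    fun ⟨h, h'⟩ => ⟨⟨⟨p.2, h, h'.1⟩, h⟩, h'⟩⟩

variable (C) in
open Finset in
theorem card_splitPairs :
    #(splitPairs C) = ∑ v ∈ C.sup id, (#{S ∈ C | v ∈ S} - 1) := by
  rw [splitPairs, card_filter, sum_product]
  refine sum_congr rfl fun v hv => ?_
  simp only [← card_filter]
  rw [← filter_filter, filter_ne', card_erase_of_mem]
  obtain ⟨S, hS, hvS⟩ := mem_sup.1 hv
  exact mem_filter.2 (canonicalBlock_spec C ⟨S, hS, hvS⟩)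

theorem blockName_splitPairs_inj {u u' : ℕ} {S S' : Finset ℕ} (hS : S ∈ C) (hu : u ∈ S)
    (hS' : S' ∈ C) (hu' : u' ∈ S')
    (h : blockName C (splitPairs C) u S = blockName C (splitPairs C) u' S') :
    u = u' ∧ S = S' := by
  obtain ⟨rfl, h₁⟩ := blockName_inj (le_maxVertex C hS hu) (le_maxVertex C hS' hu') h
  obtain ⟨-, h₂⟩ := blockName_inj (le_maxVertex C hS' hu') (le_maxVertex C hS hu) h.symm
  refine ⟨rfl, ?_⟩
  by_cases hD : (u, S) ∈ splitPairs C
  · exact h₁ hD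
  by_cases hD' : (u, S') ∈ splitPairs C
  · exact (h₂ hD').symm
  simp only [mem_splitPairs, not_and, not_not] at hD hD'
  exact (hD hS hu).trans (hD' hS' hu').symm

theorem is2ClubGraph_blockGraph_splitPairs (G : SimpleGraph ℕ)
    (hC : ∀ S ∈ C, Inducing2Club G ↑S) : Is2ClubGraph (blockGraph G C (splitPairs C)) := by
  rintro a b ⟨_ | ⟨hac, q⟩⟩
  · simp
  obtain ⟨S, hS, u, hu, -, -, -, rfl, -⟩ := id hac
  have hK : ∀ x y, x ∈ (blockName C (splitPairs C) · S) '' S →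
      (blockGraph G C (splitPairs C)).Adj x y → y ∈ (blockName C (splitPairs C) · S) '' S := by
    rintro _ y ⟨x, hx, rfl⟩ ⟨T, hT, x', hx', y', hy', -, hxx', rfl⟩
    obtain ⟨-, rfl⟩ := blockName_splitPairs_inj hS hx hT hx' hxx'.symm
    exact ⟨y', hy', rfl⟩
  obtain ⟨w, hw, rfl⟩ := (Walk.cons hac q).reachable.mem_of_adj_closed hK ⟨u, hu, rfl⟩
  obtain ⟨hreach, hdist⟩ := hC S hS u hu w hw
  refine ((hreach.dist_map_le_of_adj_closed (K := Set.univ) (B := blockGraph G C (splitPairs C))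
    (f := (blockName C (splitPairs C) · S)) (fun _ _ _ _ => trivial) (fun x y _ hxy => ?_)
    trivial).2).trans hdist
  exact ⟨S, hS, x, hxy.2.1, y, hxy.2.2, hxy.1, rfl, rfl⟩

end BlockGraph

theorem exists_opsApply_of_step {α : Type*} [DecidableEq α] (Γ : Finset α → SimpleGraph ℕ)
    (P : Finset α)
    (hstep : ∀ D ⊆ P, ∀ p ∈ P, p ∉ D → ∃ o, OpApplies o (Γ D) (Γ (insert p D))) :
    ∃ l : List Op, l.length = P.card ∧ OpsApply l (Γ ∅) (Γ P) := by
  suffices ∀ D ⊆ P, ∃ l : List Op, l.length = D.card ∧ OpsApply l (Γ ∅) (Γ D) from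
    this P subset_rfl
  intro D hD
  induction D using Finset.induction_on with
  | empty => exact ⟨[], rfl, rfl⟩
  | insert p D hpD ih =>
    obtain ⟨l, hl, hop⟩ := ih ((Finset.subset_insert _ _).trans hD)
    obtain ⟨o, ho⟩ := hstep D ((Finset.subset_insert _ _).trans hD) p
      (hD (Finset.mem_insert_self _ _)) hpD
    exact ⟨l ++ [o], by simp [hl, hpD], hop.append ⟨_, ho, rfl⟩⟩

theorem exists_opApplies_deleteEdges_insert {G : SimpleGraph ℕ} {E : Set (Sym2 ℕ)}
    {e : Sym2 ℕ} (he : e ∈ G.edgeSet) (heE : e ∉ E) :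
    ∃ o, OpApplies o (G.deleteEdges E) (G.deleteEdges (insert e E)) := by
  induction e using Sym2.ind with
  | _ u w =>
    refine ⟨Op.del u w, (deleteEdges_adj ..).2 ⟨he, heE⟩, ?_⟩
    rw [deleteEdges_deleteEdges, Set.insert_eq, Set.union_comm]

theorem exists_opsApply_of_inducing2Club {G : SimpleGraph ℕ} (hfin : G.support.Finite)
    {C : Finset (Finset ℕ)} (hC : ∀ S ∈ C, Inducing2Club G ↑S) :
    ∃ l H, l.length = coverCost G C ∧ OpsApply l G H ∧ Is2ClubGraph H := by
  set U := {e | e ∈ G.edgeSet ∧ ¬ ∃ S ∈ C, ∀ x ∈ e, x ∈ S}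
  have hU : U.Finite := by
    refine (hfin.toFinset.sym2.finite_toSet).subset fun e he => ?_
    rw [Finset.coe_sym2, hfin.coe_toFinset]
    exact edgeSet_subset_sym2_iff.2 subset_rfl he.1
  obtain ⟨l₁, hl₁, hdel⟩ := exists_opsApply_of_step (fun E => G.deleteEdges ↑E) hU.toFinset
    fun D _ e he heD => by
      simpa using exists_opApplies_deleteEdges_insert (hU.mem_toFinset.1 he).1 heD
  obtain ⟨l₂, hl₂, hsplit⟩ := exists_opsApply_of_step (blockGraph G C) (splitPairs C)
    fun D _ p hp hpD => ⟨Op.split p.1 (copyName C p),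
      isSplitAt_blockGraph_insert G (mem_splitPairs.1 hp).1 (mem_splitPairs.1 hp).2.1 hpD⟩
  rw [Finset.coe_empty, deleteEdges_empty, Set.Finite.coe_toFinset, ← blockGraph_empty] at hdel
  refine ⟨l₁ ++ l₂, _, ?_, hdel.append hsplit, is2ClubGraph_blockGraph_splitPairs G hC⟩
  rw [List.length_append, hl₁, hl₂, coverCost, card_splitPairs, Set.ncard_eq_toFinset_card U hU,
    add_comm]

theorem exists_is2ClubCover {G : SimpleGraph ℕ} (hfin : G.support.Finite) :
    ∃ C, Is2ClubCover G C := by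
  refine ⟨hfin.toFinset.image ({·}), fun v hv => ⟨{v}, by simpa using hv, by simp⟩,
    fun S hS => ?_⟩
  obtain ⟨v, -, rfl⟩ := Finset.mem_image.1 hS
  simpa using inducing2Club_singleton G v

theorem stmt5 (G : SimpleGraph ℕ) (hfin : G.support.Finite) :
    sInf {c | ∃ C : Finset (Finset ℕ), Is2ClubCover G C ∧ coverCost G C = c} =
      twoCcedvs G := by
  obtain ⟨C₀, hC₀⟩ := exists_is2ClubCover hfin
  obtain ⟨l₀, H₀, -, hl₀, hH₀⟩ := exists_opsApply_of_inducing2Club hfin hC₀.2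
  rw [twoCcedvs]
  refine le_antisymm (le_csInf ⟨_, l₀, H₀, rfl, hl₀, hH₀⟩ ?_) (le_csInf ⟨_, C₀, hC₀, rfl⟩ ?_)
  · rintro _ ⟨l, H, rfl, hl, hH⟩
    obtain ⟨C, hC, hcost⟩ := exists_is2ClubCover_coverCost_le hfin hl hH
    exact le_trans (Nat.sInf_le ⟨C, hC, rfl⟩) hcost
  · rintro _ ⟨C, hC, rfl⟩
    obtain ⟨l, H, hlen, hl, hH⟩ := exists_opsApply_of_inducing2Club hfin hC.2
    exact Nat.sInf_le ⟨l, H, hlen, hl, hH⟩
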